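/- arXiv:math/0602579 — 2 statements merged into one kernel-verified Lean document; each statement's English description precedes it below -/
import Mathlib

section
/- Lemma 1 (every active triangle has at least one inversion): Let v_i, v_j, v_r ∈ ℝ³ be three distinct points and a_i, a_j, a_r ∈ ℝ³ velocity vectors such that for each of the three edges (pairs) {i,j}, {i,r}, {j,r}, the two inner products of the endpoint velocity vectors with the edge vector have the same sign; e.g. for the edge {i,j}: either ⟨v_i − v_j, a_i⟩ = ⟨v_i − v_j, a_j⟩ = 0, or both inner products are negative, or both are positive. Orient each edge by this common sign (the edge {i,j} is oriented v_i → v_j if both inner products are negative, oriented v_j → v_i if both are positive, and unoriented if both are zero). For each vertex of the triangle, define the doubled inversion count between its two incident edges as: 2 if one edge is oriented into the vertex and the other out of it; 0 if both are oriented into the vertex or both out of it; 1 if exactly one of the two edges is unoriented; 2 if both edges are unoriented and the vertex is live (its velocity vector is nonzero); 0 if both edges are unoriented and the vertex is dead (its velocity vector is zero). If the triangle is active, i.e., at least one of a_i, a_j, a_r is nonzero, then the sum of the doubled inversion counts over the three vertices is at least 2 (i.e., the triangle has at least one inversion). -/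
/-!
Reversing an edge negates the inner product, and the same-sign condition lets each edge be read
off from either endpoint, so the data are just three signs `a, b, c` on the edges of a triangle,
seen as `(a, b)`, `(-a, c)`, `(-b, -c)` from the three vertices. A finite case check finishes:
if all edges are oriented, a cyclic orientation gives 6 and a transitive one 2 at its middle
vertex; if some but not all are, two vertices meet exactly one unoriented edge and each
contributes a half-inversion; if none is, a live vertex contributes 2.
-/

open scoped RealInnerProductSpace Classical

/-- Two real numbers "have the same sign": both zero, both negative, or both positive. -/
def SameSign (x y : ℝ) : Prop :=
  (x = 0 ∧ y = 0) ∨ (x < 0 ∧ y < 0) ∨ (0 < x ∧ 0 < y)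

/-- The sign of a real number as an integer in `{-1, 0, 1}`. -/
noncomputable def isign (x : ℝ) : ℤ :=
  if x < 0 then -1 else if x = 0 then 0 else 1

/-- The doubled inversion count between two edges meeting at a common vertex.
`x, y ∈ {-1, 0, 1}` are the signs of the inner products of the vertex's velocity
vector with the two outgoing edge vectors (so `-1` means the edge is oriented out
of the vertex, `1` into the vertex, `0` unoriented), and `live` records whether the
vertex is live (nonzero velocity):
* `2` (one inversion) if one edge is oriented into the vertex and the other out of it;
* `0` (zero inversions) if both are oriented into the vertex or both out of it;
* `1` (a half-inversion) if exactly one of the two edges is unoriented;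
* `2` (one inversion) if both are unoriented and the vertex is live;
* `0` (zero inversions) if both are unoriented and the vertex is dead. -/
noncomputable def doubledInversions (live : Prop) (x y : ℤ) : ℤ :=
  if x = 0 ∧ y = 0 then (if live then 2 else 0)
  else if x = 0 ∨ y = 0 then 1
  else if x = y then 0 else 2

theorem isign_eq_sign (x : ℝ) : isign x = (SignType.sign x : ℤ) := by
  rcases lt_trichotomy x 0 with h | rfl | h
  · simp [isign, h]
  · simp [isign]
  · simp [isign, h, h.ne', not_lt.2 h.le]

theorem isign_neg (x : ℝ) : isign (-x) = -isign x := by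
  simp only [isign_eq_sign, Left.sign_neg, SignType.coe_neg]

theorem SameSign.isign_eq {x y : ℝ} (h : SameSign x y) : isign x = isign y := by
  rcases h with ⟨rfl, rfl⟩ | ⟨hx, hy⟩ | ⟨hx, hy⟩
  · rfl
  · simp [isign_eq_sign, sign_neg hx, sign_neg hy]
  · simp [isign_eq_sign, sign_pos hx, sign_pos hy]

theorem two_le_doubledInversions_triangle {P Q R : Prop} (a b c : SignType)
    (hlive : P ∨ Q ∨ R) :
    2 ≤ doubledInversions P a b + doubledInversions Q (-a : ℤ) c
        + doubledInversions R (-b : ℤ) (-c : ℤ) := by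
  cases a <;> cases b <;> cases c <;> simp [doubledInversions] <;> split_ifs <;> tauto

theorem active_triangle_has_inversion_general
    (vi vj vr ai aj ar : EuclideanSpace ℝ (Fin 3))
    (hij : SameSign ⟪vi - vj, ai⟫ ⟪vi - vj, aj⟫)
    (hir : SameSign ⟪vi - vr, ai⟫ ⟪vi - vr, ar⟫)
    (hjr : SameSign ⟪vj - vr, aj⟫ ⟪vj - vr, ar⟫)
    (hactive : ai ≠ 0 ∨ aj ≠ 0 ∨ ar ≠ 0) :
    2 ≤ doubledInversions (ai ≠ 0)
          (isign ⟪vi - vj, ai⟫) (isign ⟪vi - vr, ai⟫)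
      + doubledInversions (aj ≠ 0)
          (isign ⟪vj - vi, aj⟫) (isign ⟪vj - vr, aj⟫)
      + doubledInversions (ar ≠ 0)
          (isign ⟪vr - vi, ar⟫) (isign ⟪vr - vj, ar⟫) := by
  have hflip (u v a : EuclideanSpace ℝ (Fin 3)) : ⟪v - u, a⟫ = -⟪u - v, a⟫ := by
    rw [← neg_sub, inner_neg_left]
  rw [hflip vi vj, hflip vi vr, hflip vj vr, isign_neg, isign_neg, isign_neg,
    ← hij.isign_eq, ← hir.isign_eq, ← hjr.isign_eq]
  simpa only [isign_eq_sign] using two_le_doubledInversions_triangle _ _ _ hactive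

/-- **Lemma 1**: every active triangle has at least one inversion.  If the velocity
vectors have same-sign projections along each of the three edges of a triangle
`(vᵢ vⱼ vᵣ)` in `ℝ³`, and the triangle is active (at least one vertex is live), then
the total doubled inversion count over the three vertices is at least `2`. -/
theorem active_triangle_has_inversion
    (vi vj vr ai aj ar : EuclideanSpace ℝ (Fin 3))
    (hij' : vi ≠ vj) (hir' : vi ≠ vr) (hjr' : vj ≠ vr)
    (hij : SameSign ⟪vi - vj, ai⟫ ⟪vi - vj, aj⟫)
    (hir : SameSign ⟪vi - vr, ai⟫ ⟪vi - vr, ar⟫)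
    (hjr : SameSign ⟪vj - vr, aj⟫ ⟪vj - vr, ar⟫)
    (hactive : ai ≠ 0 ∨ aj ≠ 0 ∨ ar ≠ 0) :
    2 ≤ doubledInversions (ai ≠ 0)
          (isign ⟪vi - vj, ai⟫) (isign ⟪vi - vr, ai⟫)
      + doubledInversions (aj ≠ 0)
          (isign ⟪vj - vi, aj⟫) (isign ⟪vj - vr, aj⟫)
      + doubledInversions (ar ≠ 0)
          (isign ⟪vr - vi, ar⟫) (isign ⟪vr - vj, ar⟫) :=
  active_triangle_has_inversion_general vi vj vr ai aj ar hij hir hjr hactive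
end

section
/- Lemma 2 (at most two inversions around every live vertex): Let V ⊂ ℝ³ be a finite set whose affine span is all of ℝ³, with P = conv(V) and every point of V an extreme point of P. Let v ∈ V, let d ≥ 3, and let w : ZMod d → V be an injective cyclic enumeration of the neighbors of v, meaning: for each i, the segment [v, w(i)] is an edge of P (an extreme subset of P), and for each i the triangle conv{v, w(i), w(i+1)} is a 2-dimensional face (extreme subset) of P. Let a : V → ℝ³ satisfy, for each i, the sign condition on the edge [v, w(i)]: the inner products ⟨v − w(i), a(v)⟩ and ⟨v − w(i), a(w(i))⟩ are both zero, both negative, or both positive. Assume the vertex v is live: a(v) ≠ 0. For i ∈ ZMod d let s(i) ∈ {−1, 0, +1} be the sign of ⟨v − w(i), a(v)⟩ (so s(i) records whether the edge [v, w(i)] is oriented out of v, unoriented, or oriented into v). Define the doubled inversion count between the consecutive edges i and i+1 as: 2 if s(i)·s(i+1) = −1; 0 if s(i)·s(i+1) = +1; 1 if exactly one of s(i), s(i+1) is zero; 2 if s(i) = s(i+1) = 0. Then the sum over all i ∈ ZMod d of the doubled inversion counts is at most 4 (i.e., there are at most two inversions around v). -/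
open scoped RealInnerProductSpace Classical

/-- The doubled inversion count between two consecutive edges at a live vertex `v`,
where `x, y ∈ {-1, 0, 1}` are the signs of the inner products of the velocity `a v`
with the two edge vectors `v - w i`, `v - w (i+1)` (so `-1` means the edge is
oriented out of `v`, `1` into `v`, `0` unoriented):
* `2` (one inversion) if `x * y = -1` (one edge in, the other out);
* `0` (zero inversions) if `x * y = 1`;
* `1` (a half-inversion) if exactly one of `x, y` is zero;
* `2` (one inversion) if `x = y = 0` (both unoriented at the live vertex `v`). -/
noncomputable def doubledInversionsLive (x y : ℤ) : ℤ :=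
  if x = 0 ∧ y = 0 then 2
  else if x = 0 ∨ y = 0 then 1
  else if x = y then 0 else 2

/-!
Put `u i = v - w i`. Every triangle `conv {v, w i, w (i + 1)}` is an exposed face of `P`, so there
is a vector `ν i` with `⟪u i, ν i⟫ = ⟪u (i + 1), ν i⟫ = 0` and `⟪u j, ν i⟫ < 0` for all other `j`.
The doubled count equals `2 (#A + #B)`, where `A` is the set of sign changes of
`i ↦ ⟪u i, a v⟫` along the cycle and `B` its set of zeros. Each of these events yields a vector
of the plane `(a v)ᗮ`: the crossing point of `[u i, u (i + 1)]` with it for `i ∈ A`, and `u i`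
for `i ∈ B`; the vector `ν i`, resp. `ν (i - 1) + ν i`, is orthogonal to it and has strictly
negative inner product with the vectors of all other events. Three vectors admitting such
functionals are linearly independent, which is impossible in a plane, so `#A + #B ≤ 2`.
-/

open Finset Module

lemma doubledInversionsLive_isign (x y : ℝ) :
    doubledInversionsLive (isign x) (isign y) =
      2 * (if x * y < 0 then 1 else 0) + (if x = 0 then 1 else 0) + (if y = 0 then 1 else 0) := by
  rcases lt_trichotomy x 0 with hx | rfl | hx <;> rcases lt_trichotomy y 0 with hy | rfl | hy <;>
    simp [doubledInversionsLive, isign, mul_neg_iff, not_lt_of_gt, ne_of_lt, ne_of_gt, *]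

lemma sum_doubledInversionsLive_isign {d : ℕ} [NeZero d] (g : ZMod d → ℝ) :
    ∑ i, doubledInversionsLive (isign (g i)) (isign (g (i + 1))) =
      2 * ((#{i | g i * g (i + 1) < 0} : ℤ) + #{i | g i = 0}) := by
  have hshift : ∑ i : ZMod d, (if g (i + 1) = 0 then (1 : ℤ) else 0) =
      ∑ i : ZMod d, if g i = 0 then 1 else 0 :=
    Equiv.sum_comp (Equiv.addRight 1) fun i => if g i = 0 then (1 : ℤ) else 0
  simp only [doubledInversionsLive_isign, sum_add_distrib, ← mul_sum, hshift, sum_boole]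
  ring

lemma ZMod.add_natCast_ne_self {d c : ℕ} (hc : 0 < c) (hcd : c < d) (k : ZMod d) :
    k + c ≠ k := by
  rw [Ne, add_eq_left, ZMod.natCast_eq_zero_iff]
  exact Nat.not_dvd_of_pos_of_lt hc hcd

lemma abs_mul_add_abs_mul_eq_zero {x y : ℝ} (h : x * y < 0) : |y| * x + |x| * y = 0 := by
  rcases mul_neg_iff.1 h with ⟨hx, hy⟩ | ⟨hx, hy⟩
  · rw [abs_of_neg hy, abs_of_pos hx]; ring
  · rw [abs_of_pos hy, abs_of_neg hx]; ring

section Triangle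

variable {E : Type*} [AddCommGroup E] [Module ℝ E]

lemma smul_add_smul_add_smul_mem_convexHull (p q r : E) {a b c : ℝ} (ha : 0 ≤ a) (hb : 0 ≤ b)
    (hc : 0 ≤ c) (habc : a + b + c = 1) :
    a • p + b • q + c • r ∈ convexHull ℝ {p, q, r} := by
  have := (convex_convexHull ℝ {p, q, r}).sum_mem (t := univ) (w := ![a, b, c]) (z := ![p, q, r])
    (by simp [Fin.forall_fin_succ, ha, hb, hc]) (by simp [Fin.sum_univ_three, habc])
    (by simp [Fin.forall_fin_succ, subset_convexHull ℝ _ (by simp : p ∈ ({p, q, r} : Set E)),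
      subset_convexHull ℝ _ (by simp : q ∈ ({p, q, r} : Set E)),
      subset_convexHull ℝ _ (by simp : r ∈ ({p, q, r} : Set E))])
  simpa [Fin.sum_univ_three, add_assoc] using this

lemma mem_convexHull_of_isExtreme_of_sub_mem_span {P : Set E} {p q r z : E}
    (hT : IsExtreme ℝ P (convexHull ℝ {p, q, r})) (hz : z ∈ P)
    (hzs : z - p ∈ Submodule.span ℝ {q - p, r - p}) : z ∈ convexHull ℝ {p, q, r} := by
  obtain ⟨β, γ, hβγ⟩ := Submodule.mem_span_pair.1 hzs
  -- pull `z` towards the centroid `c` until all barycentric coordinates are nonnegative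
  set N := |β| + |γ|
  have hN0 : 0 ≤ N := by positivity
  obtain ⟨t, ht, htN⟩ : ∃ t : ℝ, 0 < t ∧ t * (3 * N + 4) = 1 :=
    ⟨(3 * N + 4)⁻¹, by positivity, inv_mul_cancel₀ (by positivity)⟩
  have hN : 0 ≤ N + 2 - β - γ ∧ 0 ≤ N + 1 + β ∧ 0 ≤ N + 1 + γ := by
    refine ⟨?_, ?_, ?_⟩ <;> linarith [neg_abs_le β, neg_abs_le γ, le_abs_self β, le_abs_self γ]
  set c : E := (3⁻¹ : ℝ) • p + (3⁻¹ : ℝ) • q + (3⁻¹ : ℝ) • r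
  have hcT : c ∈ convexHull ℝ {p, q, r} :=
    smul_add_smul_add_smul_mem_convexHull p q r (by norm_num) (by norm_num) (by norm_num)
      (by norm_num)
  have hm : t • z + (1 - t) • c ∈ convexHull ℝ {p, q, r} := by
    have hz' : z = p + β • (q - p) + γ • (r - p) := by rw [add_assoc, hβγ]; abel
    convert smul_add_smul_add_smul_mem_convexHull p q r (mul_nonneg ht.le hN.1)
      (mul_nonneg ht.le hN.2.1) (mul_nonneg ht.le hN.2.2) (by linear_combination htN) using 1
    rw [hz']
    match_scalars <;> linear_combination (-1 / 3 : ℝ) * htN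
  exact hT.2 hz (hT.1 hcT) hm ⟨t, 1 - t, ht, by nlinarith, by ring, rfl⟩

end Triangle

section InnerProductSpace

variable {E : Type*} [NormedAddCommGroup E] [InnerProductSpace ℝ E]

lemma inner_smul_add_smul_neg {x y φ : E} {a b : ℝ} (ha : 0 < a) (hb : 0 < b)
    (hx : ⟪x, φ⟫ ≤ 0) (hy : ⟪y, φ⟫ ≤ 0) (h : ⟪x, φ⟫ < 0 ∨ ⟪y, φ⟫ < 0) :
    ⟪a • x + b • y, φ⟫ < 0 := by
  rw [inner_add_left, real_inner_smul_left, real_inner_smul_left]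
  rcases h with h | h <;> nlinarith [mul_nonpos_of_nonneg_of_nonpos ha.le hx,
    mul_nonpos_of_nonneg_of_nonpos hb.le hy]

lemma linearIndependent_of_inner_exposing {y ψ : Fin 3 → E} (hself : ∀ k, ⟪y k, ψ k⟫ = 0)
    (hother : ∀ j k, j ≠ k → ⟪y j, ψ k⟫ < 0) : LinearIndependent ℝ y := by
  refine Fintype.linearIndependent_iff.2 fun c hc => ?_
  have hrel : ∀ k, ∑ j, c j * ⟪y j, ψ k⟫ = 0 := fun k => by
    simp [← real_inner_smul_left, ← sum_inner, hc]
  have h0 := hrel 0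
  have h1 := hrel 1
  have h2 := hrel 2
  simp only [Fin.sum_univ_three, hself, mul_zero, zero_add, add_zero] at h0 h1 h2
  set p : Fin 3 → Fin 3 → ℝ := fun j k => ⟪y j, ψ k⟫
  -- `D` is the determinant of the zero-diagonal matrix `p`, and `c ᵥ* p = 0`
  set D := p 0 1 * p 1 2 * p 2 0 + p 0 2 * p 1 0 * p 2 1
  have hD : D < 0 := by
    have h01 := hother 0 1 (by decide); have h12 := hother 1 2 (by decide)
    have h20 := hother 2 0 (by decide); have h02 := hother 0 2 (by decide)
    have h10 := hother 1 0 (by decide); have h21 := hother 2 1 (by decide)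
    have := mul_neg_of_pos_of_neg (mul_pos_of_neg_of_neg h01 h12) h20
    have := mul_neg_of_pos_of_neg (mul_pos_of_neg_of_neg h02 h10) h21
    linarith
  have hc0 : c 0 * D = 0 := by
    linear_combination (p 1 2 * p 2 0) * h1 + (p 1 0 * p 2 1) * h2 - (p 1 2 * p 2 1) * h0
  have hc1 : c 1 * D = 0 := by
    linear_combination (p 0 2 * p 2 1) * h0 + (p 0 1 * p 2 0) * h2 - (p 0 2 * p 2 0) * h1
  have hc2 : c 2 * D = 0 := by
    linear_combination (p 0 1 * p 1 2) * h0 + (p 0 2 * p 1 0) * h1 - (p 0 1 * p 1 0) * h2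
  intro i
  fin_cases i <;> simp_all [hD.ne]

lemma card_le_two_of_inner_exposing [FiniteDimensional ℝ E] {ι : Type*} {S : Finset ι}
    {K : Submodule ℝ E} (hK : finrank ℝ K ≤ 2) {y ψ : ι → E} (hyK : ∀ k ∈ S, y k ∈ K)
    (hself : ∀ k ∈ S, ⟪y k, ψ k⟫ = 0) (hother : ∀ j ∈ S, ∀ k ∈ S, j ≠ k → ⟪y j, ψ k⟫ < 0) :
    #S ≤ 2 := by
  by_contra! hS
  obtain ⟨a, ha, b, hb, c, hc, hab, hac, hbc⟩ := two_lt_card.1 hS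
  set s : Fin 3 → ι := ![a, b, c]
  have hsS : ∀ i, s i ∈ S := by intro i; fin_cases i <;> assumption
  have hs : ∀ i j, i ≠ j → s i ≠ s j := by
    intro i j; fin_cases i <;> fin_cases j <;> simp [s, hab, hac, hbc, Ne.symm]
  have hli : LinearIndependent ℝ fun i => (⟨y (s i), hyK _ (hsS i)⟩ : K) :=
    .of_comp K.subtype <| linearIndependent_of_inner_exposing (fun k => hself _ (hsS k))
      fun j k hjk => hother _ (hsS j) _ (hsS k) (hs j k hjk)
  have := hli.fintype_card_le_finrank
  simp only [Fintype.card_fin] at this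
  omega

lemma exists_ne_zero_forall_mem_iff_inner_eq_zero [FiniteDimensional ℝ E] {K : Submodule ℝ E}
    (hK : finrank ℝ K + 1 = finrank ℝ E) : ∃ ν ≠ 0, ∀ x, x ∈ K ↔ ⟪x, ν⟫ = 0 := by
  have h1 : finrank ℝ Kᗮ = 1 := Submodule.finrank_add_finrank_orthogonal' hK
  obtain ⟨ν, hνK, hν⟩ := Submodule.exists_mem_ne_zero_of_ne_bot (p := Kᗮ) fun h => by
    rw [h, finrank_bot] at h1; exact zero_ne_one h1
  have hle : K ≤ (ℝ ∙ ν)ᗮ := fun x hx =>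
    Submodule.mem_orthogonal_singleton_iff_inner_left.2
      (Submodule.inner_right_of_mem_orthogonal hx hνK)
  have hrank : finrank ℝ K = finrank ℝ (ℝ ∙ ν)ᗮ :=
    (Submodule.finrank_add_finrank_orthogonal'
      (by rw [finrank_span_singleton hν, add_comm, hK])).symm
  refine ⟨ν, hν, fun x => ?_⟩
  rw [Submodule.eq_of_le_of_finrank_eq hle hrank, Submodule.mem_orthogonal_singleton_iff_inner_left]

lemma exists_mem_openSegment_inner_sub_eq_zero (v : E) {x y ν : E}
    (h : ⟪v - x, ν⟫ * ⟪v - y, ν⟫ < 0) : ∃ z ∈ openSegment ℝ x y, ⟪v - z, ν⟫ = 0 := by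
  set a := ⟪v - x, ν⟫
  set b := ⟪v - y, ν⟫
  have hba : b - a ≠ 0 := fun h0 => by
    rw [sub_eq_zero.1 h0] at h; nlinarith [mul_self_nonneg a]
  refine ⟨(b / (b - a)) • x + (-a / (b - a)) • y,
    ⟨b / (b - a), -a / (b - a), ?_, ?_, by field_simp; ring, rfl⟩, ?_⟩
  · rcases mul_neg_iff.1 h with h | h
    · exact div_pos_of_neg_of_neg h.2 (by linarith)
    · exact div_pos h.2 (by linarith)
  · rcases mul_neg_iff.1 h with h | h
    · exact div_pos_of_neg_of_neg (by linarith) (by linarith)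
    · exact div_pos (by linarith) (by linarith)
  · have hsum : b / (b - a) + -a / (b - a) = 1 := by field_simp; ring
    have hz : v - ((b / (b - a)) • x + (-a / (b - a)) • y) =
        (b / (b - a)) • (v - x) + (-a / (b - a)) • (v - y) := by
      linear_combination (norm := module) -(hsum • v)
    rw [hz, inner_add_left, real_inner_smul_left, real_inner_smul_left]
    field_simp
    ring

theorem exists_inner_normal_of_isExtreme_triangle (hE : finrank ℝ E = 3) {P : Set E}
    (hP : Convex ℝ P) {v p q : E} (hT : IsExtreme ℝ P (convexHull ℝ {v, p, q}))
    (hdim : finrank ℝ (affineSpan ℝ (convexHull ℝ {v, p, q})).direction = 2) :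
    ∃ ν, ⟪v - p, ν⟫ = 0 ∧ ⟪v - q, ν⟫ = 0 ∧
      ∀ u ∈ P, u ∉ convexHull ℝ {v, p, q} → ⟪v - u, ν⟫ < 0 := by
  have : FiniteDimensional ℝ E := Module.finite_of_finrank_eq_succ hE
  set T := convexHull ℝ {v, p, q}
  set K := Submodule.span ℝ {p - v, q - v}
  have hK : finrank ℝ K + 1 = finrank ℝ E := by
    rw [affineSpan_convexHull, direction_affineSpan,
      vectorSpan_eq_span_vsub_set_right ℝ (Set.mem_insert v _), Set.image_insert_eq,
      Set.image_pair, vsub_self, Submodule.span_insert_zero, vsub_eq_sub, vsub_eq_sub] at hdim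
    rw [hdim, hE]
  obtain ⟨ν₀, -, hν₀⟩ := exists_ne_zero_forall_mem_iff_inner_eq_zero hK
  have hKν₀ : ∀ u, ⟪v - u, ν₀⟫ = 0 ↔ u - v ∈ K := fun u => by
    rw [hν₀, ← neg_sub, inner_neg_left, neg_eq_zero]
  have hplane : ∀ u ∈ P, u ∉ T → ⟪v - u, ν₀⟫ ≠ 0 := fun u hu huT h0 =>
    huT (mem_convexHull_of_isExtreme_of_sub_mem_span hT hu ((hKν₀ u).1 h0))
  have hside : ∀ u ∈ P, u ∉ T → ∀ u' ∈ P, u' ∉ T → 0 < ⟪v - u, ν₀⟫ * ⟪v - u', ν₀⟫ := by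
    intro u hu huT u' hu' hu'T
    by_contra! hneg
    rcases hneg.lt_or_eq with hneg | h0
    · obtain ⟨z, hz, hz0⟩ := exists_mem_openSegment_inner_sub_eq_zero v hneg
      have hzT : z ∈ T := by
        by_contra hzT
        exact hplane z (hP.openSegment_subset hu hu' hz) hzT hz0
      exact huT (hT.2 hu hu' hzT hz)
    · rcases mul_eq_zero.1 h0 with h | h
      exacts [hplane u hu huT h, hplane u' hu' hu'T h]
  by_cases hne : ∃ u₀ ∈ P, u₀ ∉ T
  · obtain ⟨u₀, hu₀, hu₀T⟩ := hne
    refine ⟨-⟪v - u₀, ν₀⟫ • ν₀, ?_, ?_, fun u hu huT => ?_⟩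
    · rw [real_inner_smul_right, (hKν₀ p).2 (Submodule.subset_span (by simp)), mul_zero]
    · rw [real_inner_smul_right, (hKν₀ q).2 (Submodule.subset_span (by simp)), mul_zero]
    · rw [real_inner_smul_right]
      nlinarith [hside u₀ hu₀ hu₀T u hu huT]
  · push Not at hne
    exact ⟨0, by simp, by simp, fun u hu huT => absurd (hne u hu) huT⟩

variable {d : ℕ}

structure ExposesEdges (u ν : ZMod d → E) : Prop where
  inner_left : ∀ i, ⟪u i, ν i⟫ = 0
  inner_right : ∀ i, ⟪u (i + 1), ν i⟫ = 0
  inner_neg : ∀ i j, j ≠ i → j ≠ i + 1 → ⟪u j, ν i⟫ < 0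

namespace ExposesEdges

variable {u ν : ZMod d → E}

lemma inner_nonpos (h : ExposesEdges u ν) (i j : ZMod d) : ⟪u j, ν i⟫ ≤ 0 := by
  by_cases hi : j = i
  · rw [hi, h.inner_left]
  by_cases hi1 : j = i + 1
  · rw [hi1, h.inner_right]
  exact (h.inner_neg i j hi hi1).le

lemma inner_vertex_self (h : ExposesEdges u ν) (k : ZMod d) : ⟪u k, ν (k - 1) + ν k⟫ = 0 := by
  rw [inner_add_right, h.inner_left, add_zero]
  simpa using h.inner_right (k - 1)

lemma inner_vertex_nonpos (h : ExposesEdges u ν) (k j : ZMod d) :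
    ⟪u j, ν (k - 1) + ν k⟫ ≤ 0 := by
  rw [inner_add_right]
  exact add_nonpos (h.inner_nonpos _ _) (h.inner_nonpos _ _)

lemma inner_vertex_neg (h : ExposesEdges u ν) (hd : 3 ≤ d) {j k : ZMod d} (hjk : j ≠ k) :
    ⟪u j, ν (k - 1) + ν k⟫ < 0 := by
  rw [inner_add_right]
  have hk := h.inner_nonpos k j
  have hk1 := h.inner_nonpos (k - 1) j
  by_cases hj : j = k - 1
  · have : j ≠ k + 1 := fun hj' => ZMod.add_natCast_ne_self (c := 2) (by norm_num) hd j <| by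
      push_cast; linear_combination hj - hj'
    linarith [h.inner_neg k j hjk this]
  · linarith [h.inner_neg (k - 1) j hj (by rwa [sub_add_cancel])]

theorem card_add_card_le_two (h : ExposesEdges u ν) (hd : 3 ≤ d) [NeZero d]
    (hE : finrank ℝ E = 3) {n : E} (hn : n ≠ 0) :
    #{i | ⟪u i, n⟫ * ⟪u (i + 1), n⟫ < 0} + #{i | ⟪u i, n⟫ = 0} ≤ 2 := by
  have : FiniteDimensional ℝ E := Module.finite_of_finrank_eq_succ hE
  set g : ZMod d → ℝ := fun i => ⟪u i, n⟫
  have htwo : ∀ k : ZMod d, k + 1 + 1 ≠ k := fun k => by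
    simpa [add_assoc, one_add_one_eq_two] using ZMod.add_natCast_ne_self (c := 2) two_pos hd k
  -- an edge site `i` is represented by the point where the plane `n⊥` crosses `[u i, u (i + 1)]`
  set y : ZMod d ⊕ ZMod d → E := Sum.elim (fun i => |g (i + 1)| • u i + |g i| • u (i + 1)) u
  set ψ : ZMod d ⊕ ZMod d → E := Sum.elim ν fun k => ν (k - 1) + ν k
  have hedge : ∀ l, g l * g (l + 1) < 0 → ∀ φ, (∀ j, ⟪u j, φ⟫ ≤ 0) →
      (⟪u l, φ⟫ < 0 ∨ ⟪u (l + 1), φ⟫ < 0) → ⟪y (.inl l), φ⟫ < 0 := by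
    intro l hl φ hφ hlφ
    obtain ⟨h0, h1⟩ := mul_ne_zero_iff.1 hl.ne
    exact inner_smul_add_smul_neg (abs_pos.2 h1) (abs_pos.2 h0) (hφ _) (hφ _) hlφ
  rw [← card_disjSum]
  refine card_le_two_of_inner_exposing (K := (ℝ ∙ n)ᗮ)
    (Submodule.finrank_add_finrank_orthogonal' (by rw [finrank_span_singleton hn, hE])).le
    (y := y) (ψ := ψ) ?_ ?_ ?_
  · rintro (l | l) hl <;> simp only [inl_mem_disjSum, inr_mem_disjSum, mem_filter, mem_univ,
      true_and] at hl <;> rw [Submodule.mem_orthogonal_singleton_iff_inner_left]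
    · simp only [y, Sum.elim_inl, inner_add_left, real_inner_smul_left]
      exact abs_mul_add_abs_mul_eq_zero hl
    · exact hl
  · rintro (l | l) -
    · simp only [y, ψ, Sum.elim_inl, inner_add_left, real_inner_smul_left, h.inner_left,
        h.inner_right, mul_zero, add_zero]
    · exact h.inner_vertex_self l
  · rintro (l | l) hl (k | k) hk hlk <;>
      simp only [inl_mem_disjSum, inr_mem_disjSum, mem_filter, mem_univ, true_and] at hl hk
    · have hlk' : l ≠ k := fun e => hlk (congrArg _ e)
      refine hedge l hl _ (h.inner_nonpos k) ?_
      by_cases hl1 : l = k + 1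
      · refine .inr (h.inner_neg k (l + 1) (by rw [hl1]; exact htwo k) fun e => hlk' ?_)
        exact add_right_cancel e
      · exact .inl (h.inner_neg k l hlk' hl1)
    · have hlk' : l ≠ k := by rintro rfl; simp [hk] at hl
      exact hedge l hl _ (fun j => h.inner_vertex_nonpos k j) (.inl (h.inner_vertex_neg hd hlk'))
    · refine h.inner_neg k l ?_ ?_ <;> rintro rfl <;> simp [hl] at hk
    · exact h.inner_vertex_neg hd fun e => hlk (congrArg _ e)

end ExposesEdges

end InnerProductSpace

theorem at_most_two_inversions_around_live_vertex_general
    (V : Finset (EuclideanSpace ℝ (Fin 3)))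
    (P : Set (EuclideanSpace ℝ (Fin 3)))
    (hP : P = convexHull ℝ (V : Set (EuclideanSpace ℝ (Fin 3))))
    (hvert : ∀ u ∈ V, u ∈ Set.extremePoints ℝ P)
    (v : EuclideanSpace ℝ (Fin 3))
    (d : ℕ) (hd : 3 ≤ d) [NeZero d]
    (w : ZMod d → EuclideanSpace ℝ (Fin 3))
    (hwV : ∀ i, w i ∈ V)
    (hwinj : Function.Injective w)
    (hwne : ∀ i, w i ≠ v)
    (htris : ∀ i : ZMod d,
      IsExtreme ℝ P (convexHull ℝ ({v, w i, w (i + 1)} : Set (EuclideanSpace ℝ (Fin 3)))) ∧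
      Module.finrank ℝ
        (affineSpan ℝ
          (convexHull ℝ ({v, w i, w (i + 1)} : Set (EuclideanSpace ℝ (Fin 3))))).direction = 2)
    (a : EuclideanSpace ℝ (Fin 3) → EuclideanSpace ℝ (Fin 3))
    (hlive : a v ≠ 0) :
    ∑ i : ZMod d,
        doubledInversionsLive (isign ⟪v - w i, a v⟫) (isign ⟪v - w (i + 1), a v⟫) ≤ 4 := by
  have hwP : ∀ j, w j ∈ P := fun j => hP ▸ subset_convexHull ℝ _ (hwV j)
  choose ν hν using fun i => exists_inner_normal_of_isExtreme_triangle finrank_euclideanSpace_fin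
    (hP ▸ convex_convexHull ℝ _) (htris i).1 (htris i).2
  have hexp : ExposesEdges (fun i => v - w i) ν := by
    refine ⟨fun i => (hν i).1, fun i => (hν i).2.1, fun i j hji hji1 =>
      (hν i).2.2 _ (hwP j) fun hmem => ?_⟩
    obtain h | h | h := extremePoints_convexHull_subset <|
      inter_extremePoints_subset_extremePoints_of_subset (htris i).1.1 ⟨hmem, hvert _ (hwV j)⟩
    exacts [hwne j h, hji (hwinj h), hji1 (hwinj h)]
  have hcard := hexp.card_add_card_le_two hd finrank_euclideanSpace_fin hlive
  rw [sum_doubledInversionsLive_isign fun i => ⟪v - w i, a v⟫]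
  omega

/-- **Lemma 2**: there are at most two inversions around every live vertex.
Here `V ⊂ ℝ³` is the vertex set of a convex polytope `P = conv V` with full affine
span, all points of `V` extreme in `P`; `w : ZMod d → V` (`d ≥ 3`) is an injective
cyclic enumeration of the neighbors of the vertex `v`, i.e. each segment `[v, w i]`
is an edge of `P` and each `conv {v, w i, w (i+1)}` is a 2-dimensional face of `P`;
`a` satisfies the same-sign condition along each edge `[v, w i]`, and `v` is live
(`a v ≠ 0`).  Then the total doubled inversion count around `v` is at most `4`. -/
theorem at_most_two_inversions_around_live_vertex
    (V : Finset (EuclideanSpace ℝ (Fin 3)))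
    (P : Set (EuclideanSpace ℝ (Fin 3)))
    (hP : P = convexHull ℝ (V : Set (EuclideanSpace ℝ (Fin 3))))
    (hspan : affineSpan ℝ (V : Set (EuclideanSpace ℝ (Fin 3))) = ⊤)
    (hvert : ∀ u ∈ V, u ∈ Set.extremePoints ℝ P)
    (v : EuclideanSpace ℝ (Fin 3)) (hv : v ∈ V)
    (d : ℕ) (hd : 3 ≤ d) [NeZero d]
    (w : ZMod d → EuclideanSpace ℝ (Fin 3))
    (hwV : ∀ i, w i ∈ V)
    (hwinj : Function.Injective w)
    (hwne : ∀ i, w i ≠ v)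
    (hedges : ∀ i, IsExtreme ℝ P (segment ℝ v (w i)))
    (htris : ∀ i : ZMod d,
      IsExtreme ℝ P (convexHull ℝ ({v, w i, w (i + 1)} : Set (EuclideanSpace ℝ (Fin 3)))) ∧
      Module.finrank ℝ
        (affineSpan ℝ
          (convexHull ℝ ({v, w i, w (i + 1)} : Set (EuclideanSpace ℝ (Fin 3))))).direction = 2)
    (a : EuclideanSpace ℝ (Fin 3) → EuclideanSpace ℝ (Fin 3))
    (hsign : ∀ i, SameSign ⟪v - w i, a v⟫ ⟪v - w i, a (w i)⟫)
    (hlive : a v ≠ 0) :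
    ∑ i : ZMod d,
        doubledInversionsLive (isign ⟪v - w i, a v⟫) (isign ⟪v - w (i + 1), a v⟫) ≤ 4 :=
  at_most_two_inversions_around_live_vertex_general V P hP hvert v d hd w hwV hwinj hwne htris a
    hlive
end
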